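/- With S₀ = (1−x²)∂_x² + (1 − (2a+3)x)∂_x and L₀ = 2(1−x)∂_x R + 2(a+1)(1−R) acting on polynomials, one has the algebraic relation L₀² − 4(1+a)L₀ = −4S₀. -/

import Mathlib

open Polynomial

/-- The Sturm–Liouville operator `S₀ = (1-x²)∂ₓ² + (1-(2a+3)x)∂ₓ` on polynomials. -/
noncomputable def S0 (a : ℝ) (p : Polynomial ℝ) : Polynomial ℝ :=
  (1 - X ^ 2) * derivative (derivative p) + (1 - C (2 * a + 3) * X) * derivative p

/-- The Dunkl-type operator `L₀ = 2(1-x)∂ₓ R + 2(a+1)(1-R)` on polynomials. -/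
noncomputable def L0 (a : ℝ) (p : Polynomial ℝ) : Polynomial ℝ :=
  (2 : ℝ) • ((1 - X) * derivative (p.comp (-X))) + (2 * (a + 1)) • (p - p.comp (-X))

theorem derivative_comp_neg_X {R : Type*} [CommRing R] (p : R[X]) :
    derivative (p.comp (-X)) = -(derivative p).comp (-X) := by
  simp [derivative_comp]

theorem L0_comp_neg_X (a : ℝ) (p : ℝ[X]) :
    (L0 a p).comp (-X) = (2 : ℝ) • ((1 + X) * -derivative p) + (2 * (a + 1)) • (p.comp (-X) - p) := by
  simp only [L0, add_comp, smul_comp, mul_comp_neg_X, sub_comp, one_comp, X_comp, sub_neg_eq_add,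
    derivative_comp_neg_X, neg_comp, comp_neg_X_comp_neg_X]

/-- The algebraic relation `L₀² - 4(1+a) L₀ = -4 S₀`. -/
theorem L0_squared_relation (a : ℝ) (p : Polynomial ℝ) :
    L0 a (L0 a p) - (4 * (1 + a)) • L0 a p = (-4 : ℝ) • S0 a p := by
  conv_lhs => rw [L0, L0_comp_neg_X]
  simp only [L0, S0, derivative_comp_neg_X, derivative_add, derivative_sub, derivative_smul,
    derivative_mul, derivative_one, derivative_X]
  simp only [smul_eq_C_mul, map_neg, map_mul, map_ofNat, map_add, map_one]
  ring
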